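/- Every element A of SU(2) (i.e. every 2×2 complex unitary matrix with determinant 1) can be written as a product of exactly two π-Fraxis gates: there exist unit vectors n₁, n₂ ∈ ℝ³ with A = R_{n₁}(π)·R_{n₂}(π). -/

import Mathlib

/-!
Writing `A ∈ SU(2)` in quaternion form `A = w•1 − i•(v·σ)` with `w² + |v|² = 1`, and using
`(m·σ)(n·σ) = (m·n)•1 + i•(m×n)·σ`, the product `R_m(π) R_n(π) = −(m·σ)(n·σ)` equals `A` as
soon as `m·n = −w` and `m×n = v`. Such unit vectors exist: take any unit `m ⊥ v` and
`n = −w m + v×m`; then `m×n = (m·m) v − (m·v) m = v` and `|n|² = w² + |v|²|m|² = 1`.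
-/

open Matrix Complex

noncomputable def PX : Matrix (Fin 2) (Fin 2) ℂ := !![0, 1; 1, 0]
noncomputable def PY : Matrix (Fin 2) (Fin 2) ℂ := !![0, -Complex.I; Complex.I, 0]
noncomputable def PZ : Matrix (Fin 2) (Fin 2) ℂ := !![1, 0; 0, -1]

/-- The Pauli matrices `σ₁ = X`, `σ₂ = Y`, `σ₃ = Z`. -/
noncomputable def pauli : Fin 3 → Matrix (Fin 2) (Fin 2) ℂ := ![PX, PY, PZ]

/-- `n·σ = n₁X + n₂Y + n₃Z`. -/
noncomputable def nsigma (n : Fin 3 → ℝ) : Matrix (Fin 2) (Fin 2) ℂ :=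
  (n 0 : ℂ) • PX + (n 1 : ℂ) • PY + (n 2 : ℂ) • PZ

/-- `R_n(θ) = cos(θ/2)•1 − i·sin(θ/2)•(n·σ)`. -/
noncomputable def Rgate (n : Fin 3 → ℝ) (θ : ℝ) : Matrix (Fin 2) (Fin 2) ℂ :=
  ((Real.cos (θ / 2) : ℂ)) • (1 : Matrix (Fin 2) (Fin 2) ℂ)
    - (Complex.I * (Real.sin (θ / 2) : ℂ)) • nsigma n

theorem exists_dotProduct_self_eq_one_and_dotProduct_eq_zero {ι : Type*} [Fintype ι]
    (hι : 2 ≤ Fintype.card ι) (v : ι → ℝ) : ∃ m : ι → ℝ, m ⬝ᵥ m = 1 ∧ m ⬝ᵥ v = 0 := by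
  have hker : LinearMap.ker (dotProductBilin ℝ ℝ v) ≠ ⊥ :=
    LinearMap.ker_ne_bot_of_finrank_lt <| by
      rw [Module.finrank_self, Module.finrank_fintype_fun_eq_card]; omega
  obtain ⟨x, hx, hx0⟩ := (Submodule.ne_bot_iff _).1 hker
  rw [LinearMap.mem_ker, dotProductBilin_apply_apply] at hx
  have hpos : 0 < x ⬝ᵥ x :=
    (dotProduct_self_star_nonneg x).lt_of_ne (Ne.symm (dotProduct_self_eq_zero.not.2 hx0))
  refine ⟨(√(x ⬝ᵥ x))⁻¹ • x, ?_, ?_⟩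
  · rw [smul_dotProduct, dotProduct_smul, smul_eq_mul, smul_eq_mul, ← mul_assoc, ← mul_inv,
      Real.mul_self_sqrt hpos.le, inv_mul_cancel₀ hpos.ne']
  · rw [smul_dotProduct, dotProduct_comm x v, hx, smul_zero]

theorem exists_unit_dotProduct_eq_and_cross_eq {w : ℝ} {v : Fin 3 → ℝ}
    (h : w ^ 2 + v ⬝ᵥ v = 1) :
    ∃ m n : Fin 3 → ℝ, m ⬝ᵥ m = 1 ∧ n ⬝ᵥ n = 1 ∧ m ⬝ᵥ n = -w ∧ m ⨯₃ n = v := by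
  obtain ⟨m, hm, hmv⟩ := exists_dotProduct_self_eq_one_and_dotProduct_eq_zero (by simp) v
  have hvm : v ⬝ᵥ m = 0 := by rw [dotProduct_comm, hmv]
  have hcross : v ⨯₃ m ⬝ᵥ m = 0 := by rw [dotProduct_comm, dot_cross_self]
  refine ⟨m, -w • m + v ⨯₃ m, hm, ?_, ?_, ?_⟩
  · simp only [add_dotProduct, dotProduct_add, smul_dotProduct, dotProduct_smul, dot_cross_self,
      hcross, cross_dot_cross, hm, hmv, hvm, smul_eq_mul]
    linear_combination h
  · rw [dotProduct_add, dotProduct_smul, hm, dot_cross_self, smul_eq_mul, mul_one, add_zero]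
  · rw [map_add, map_smul, cross_self, smul_zero, zero_add, cross_cross_eq_smul_sub_smul', hm,
      hvm, one_smul, zero_smul, sub_zero]

theorem Rgate_pi (n : Fin 3 → ℝ) : Rgate n Real.pi = -I • nsigma n := by
  simp [Rgate]

theorem nsigma_mul_nsigma (m n : Fin 3 → ℝ) :
    nsigma m * nsigma n = ((m ⬝ᵥ n : ℝ) : ℂ) • 1 + I • nsigma (m ⨯₃ n) := by
  ext i j
  fin_cases i <;> fin_cases j <;>
    simp [nsigma, PX, PY, PZ, vec3_dotProduct, cross_apply, Matrix.mul_apply, Complex.ext_iff] <;>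
    grind

theorem Rgate_pi_mul_Rgate_pi (m n : Fin 3 → ℝ) :
    Rgate m Real.pi * Rgate n Real.pi = ((-(m ⬝ᵥ n) : ℝ) : ℂ) • 1 - I • nsigma (m ⨯₃ n) := by
  rw [Rgate_pi, Rgate_pi, smul_mul_smul_comm, nsigma_mul_nsigma, smul_add, smul_smul, smul_smul]
  simp only [neg_mul_neg, I_mul_I, Complex.ofReal_neg]
  module

theorem conjTranspose_eq_adjugate {n α : Type*} [Fintype n] [DecidableEq n] [CommRing α]
    [StarRing α] {A : Matrix n n α} (hA : A * Aᴴ = 1) (hdet : A.det = 1) :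
    Aᴴ = A.adjugate := by
  rw [← inv_eq_right_inv hA, Matrix.inv_def, hdet, Ring.inverse_one, one_smul]

theorem exists_eq_smul_one_sub_I_smul_nsigma {A : Matrix (Fin 2) (Fin 2) ℂ} (hA : A * Aᴴ = 1)
    (hdet : A.det = 1) :
    ∃ (w : ℝ) (v : Fin 3 → ℝ), w ^ 2 + v ⬝ᵥ v = 1 ∧ A = (w : ℂ) • 1 - I • nsigma v := by
  have hAH := congrFun₂ (conjTranspose_eq_adjugate hA hdet)
  have h11 : A 1 1 = star (A 0 0) := by simpa [adjugate_fin_two] using (hAH 0 0).symm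
  have h10 : A 1 0 = -star (A 0 1) := by
    simpa [adjugate_fin_two] using congrArg Neg.neg (hAH 1 0).symm
  rw [det_fin_two, h11, h10] at hdet
  refine ⟨(A 0 0).re, ![-(A 0 1).im, -(A 0 1).re, -(A 0 0).im], ?_, ?_⟩
  · have hnorm := congrArg Complex.re hdet
    simp only [Fin.isValue, RCLike.star_def, mul_neg, sub_neg_eq_add, add_re, mul_re, conj_re,
      conj_im, one_re, dotProduct_cons, head_cons, neg_mul, neg_neg, tail_cons,
      dotProduct_of_isEmpty, add_zero] at hnorm ⊢
    linear_combination hnorm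
  · ext i j
    fin_cases i <;> fin_cases j <;> simp [nsigma, PX, PY, PZ, Complex.ext_iff, h11, h10]

theorem su2_eq_two_pi_fraxis (A : Matrix (Fin 2) (Fin 2) ℂ)
    (hA : A * Aᴴ = 1) (hdet : A.det = 1) :
    ∃ n₁ n₂ : Fin 3 → ℝ,
      n₁ 0 ^ 2 + n₁ 1 ^ 2 + n₁ 2 ^ 2 = 1 ∧
      n₂ 0 ^ 2 + n₂ 1 ^ 2 + n₂ 2 ^ 2 = 1 ∧
      A = Rgate n₁ Real.pi * Rgate n₂ Real.pi := by
  obtain ⟨w, v, hwv, rfl⟩ := exists_eq_smul_one_sub_I_smul_nsigma hA hdet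
  obtain ⟨m, n, hm, hn, hmn, hcross⟩ := exists_unit_dotProduct_eq_and_cross_eq hwv
  rw [vec3_dotProduct] at hm hn
  refine ⟨m, n, by linear_combination hm, by linear_combination hn, ?_⟩
  rw [Rgate_pi_mul_Rgate_pi, hmn, hcross, neg_neg]
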